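/- arXiv:1701.06269 — 4 statements merged into one kernel-verified Lean document; each statement's English description precedes it below -/
import Mathlib

section
/- Let σ(r) = 4(1-e^{-r²/4})/r². Then |σ'(r)| is comparable to min(r, 1/r³): there exists C > 0 such that C^{-1} min(r, r^{-3}) ≤ |σ'(r)| ≤ C min(r, r^{-3}) for all r > 0. -/
open Real

noncomputable def oseenSigma (r : ℝ) : ℝ := 4 * (1 - Real.exp (-r ^ 2 / 4)) / r ^ 2

lemma deriv_oseenSigma' (r : ℝ) (hr : 0 < r) :
    deriv oseenSigma r
      = -(8 * (1 - (1 + r ^ 2 / 4) * Real.exp (-r ^ 2 / 4))) / r ^ 3 := by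
  have h1 : HasDerivAt (fun x : ℝ => -x ^ 2 / 4) (-(2 * r) / 4) r := by
    exact ((hasDerivAt_pow 2 r).neg.div_const 4).congr_deriv (by ring)
  have h2 : HasDerivAt (fun x : ℝ => Real.exp (-x ^ 2 / 4))
      (Real.exp (-r ^ 2 / 4) * (-(2 * r) / 4)) r := h1.exp
  have hf : HasDerivAt (fun x : ℝ => 4 * (1 - Real.exp (-x ^ 2 / 4)))
      (4 * (0 - Real.exp (-r ^ 2 / 4) * (-(2 * r) / 4))) r :=
    ((hasDerivAt_const r (1:ℝ)).sub h2).const_mul 4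
  have hg : HasDerivAt (fun x : ℝ => x ^ 2) (2 * r ^ 1) r := hasDerivAt_pow 2 r
  have hd := hf.div hg (by positivity)
  have := hd.deriv
  rw [show ((fun x : ℝ => 4 * (1 - Real.exp (-x ^ 2 / 4))) / fun x : ℝ => x ^ 2) = oseenSigma from rfl] at this
  rw [this]
  have hE := Real.exp_pos (-r ^ 2 / 4)
  field_simp
  ring

lemma oseen_key (u : ℝ) (hu : 0 ≤ u) : Real.exp (-u) * (1 + u / 2) ^ 2 ≤ 1 := by
  have h1 : u / 2 + 1 ≤ Real.exp (u / 2) := Real.add_one_le_exp (u / 2)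
  have h2 : Real.exp (u / 2) * Real.exp (u / 2) = Real.exp u := by
    rw [← Real.exp_add]; ring_nf
  have h3 : Real.exp (-u) * Real.exp u = 1 := by rw [← Real.exp_add]; simp
  have h4 := Real.exp_pos (-u)
  have h5 := Real.exp_pos (u / 2)
  nlinarith [mul_le_mul h1 h1 (by linarith) h5.le]

lemma oseen_G_nonneg (u : ℝ) (hu : 0 ≤ u) : 0 ≤ 1 - (1 + u) * Real.exp (-u) := by
  have h1 : u + 1 ≤ Real.exp u := Real.add_one_le_exp u
  have h2 : Real.exp (-u) * Real.exp u = 1 := by rw [← Real.exp_add]; simp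
  have h3 := Real.exp_pos (-u)
  nlinarith

lemma oseen_G_le_sq (u : ℝ) (hu : 0 ≤ u) : 1 - (1 + u) * Real.exp (-u) ≤ u ^ 2 := by
  have h1 : 1 - u ≤ Real.exp (-u) := by linarith [Real.add_one_le_exp (-u)]
  nlinarith

lemma oseen_G_ge_small (u : ℝ) (hu : 0 ≤ u) (hu1 : u ≤ 1) :
    u ^ 2 / 9 ≤ 1 - (1 + u) * Real.exp (-u) := by
  have h1 := oseen_key u hu
  have h2 := Real.exp_pos (-u)
  have hp : 1 + u ≤ (1 - u ^ 2 / 9) * (1 + u / 2) ^ 2 := by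
    nlinarith [mul_nonneg (sq_nonneg u)
      (mul_nonneg (by linarith : (0:ℝ) ≤ 1 - u) (by linarith : (0:ℝ) ≤ 5 + u))]
  have h9 : (0:ℝ) ≤ 1 - u ^ 2 / 9 := by nlinarith
  have : (1 + u) * Real.exp (-u) ≤ (1 - u ^ 2 / 9) := by
    calc (1 + u) * Real.exp (-u)
        ≤ ((1 - u ^ 2 / 9) * (1 + u / 2) ^ 2) * Real.exp (-u) :=
          mul_le_mul_of_nonneg_right hp h2.le
      _ = (1 - u ^ 2 / 9) * (Real.exp (-u) * (1 + u / 2) ^ 2) := by ring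
      _ ≤ (1 - u ^ 2 / 9) * 1 := mul_le_mul_of_nonneg_left h1 h9
      _ = 1 - u ^ 2 / 9 := mul_one _
  linarith

lemma oseen_G_ge_big (u : ℝ) (hu : 1 ≤ u) :
    1 / 9 ≤ 1 - (1 + u) * Real.exp (-u) := by
  have h1 := oseen_key u (by linarith)
  have h2 := Real.exp_pos (-u)
  have hp : 1 + u ≤ (8 / 9) * (1 + u / 2) ^ 2 := by nlinarith
  have : (1 + u) * Real.exp (-u) ≤ 8 / 9 := by
    calc (1 + u) * Real.exp (-u)
        ≤ ((8 / 9) * (1 + u / 2) ^ 2) * Real.exp (-u) :=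
          mul_le_mul_of_nonneg_right hp h2.le
      _ = (8 / 9) * (Real.exp (-u) * (1 + u / 2) ^ 2) := by ring
      _ ≤ (8 / 9) * 1 := by linarith
      _ = 8 / 9 := mul_one _
  linarith

theorem stmt_10 :
    ∃ C : ℝ, 0 < C ∧ ∀ r : ℝ, 0 < r →
      C⁻¹ * min r (r ^ 3)⁻¹ ≤ |deriv oseenSigma r| ∧
        |deriv oseenSigma r| ≤ C * min r (r ^ 3)⁻¹ := by
  refine ⟨18, by norm_num, fun r hr => ?_⟩
  have hr3 : (0:ℝ) < r ^ 3 := by positivity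
  obtain ⟨G, hG_def⟩ : ∃ G : ℝ, G = 1 - (1 + r ^ 2 / 4) * Real.exp (-(r ^ 2 / 4)) :=
    ⟨_, rfl⟩
  have hu0 : (0:ℝ) ≤ r ^ 2 / 4 := by positivity
  have hG0 : 0 ≤ G := hG_def ▸ oseen_G_nonneg _ hu0
  have habs : |deriv oseenSigma r| = 8 * G / r ^ 3 := by
    rw [deriv_oseenSigma' r hr, show -r ^ 2 / 4 = -(r ^ 2 / 4) from by ring, ← hG_def]
    rw [abs_div, abs_of_pos hr3, abs_neg, abs_of_nonneg (by positivity : (0:ℝ) ≤ 8 * G)]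
  rw [habs]
  rcases le_total r 2 with h2 | h2
  · -- small r : r^2/4 ≤ 1
    have hu1 : r ^ 2 / 4 ≤ 1 := by nlinarith
    have hGlow : (r ^ 2 / 4) ^ 2 / 9 ≤ G := hG_def ▸ oseen_G_ge_small _ hu0 hu1
    have hGhigh : G ≤ (r ^ 2 / 4) ^ 2 := hG_def ▸ oseen_G_le_sq _ hu0
    have hr2 : r ^ 2 ≤ 4 := by nlinarith
    have hGle1 : G ≤ 1 := by
      nlinarith [hGhigh, mul_nonneg (by linarith : (0:ℝ) ≤ 4 - r ^ 2)
        (by positivity : (0:ℝ) ≤ 4 + r ^ 2)]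
    constructor
    · have ha : (18:ℝ)⁻¹ * min r ((r ^ 3)⁻¹) ≤ (18:ℝ)⁻¹ * r :=
        mul_le_mul_of_nonneg_left (min_le_left _ _) (by norm_num)
      have h1 : r / 18 ≤ 8 * G / r ^ 3 := by
        rw [div_le_div_iff₀ (by norm_num) hr3]
        linarith [hGlow, show r * r ^ 3 = (r ^ 2 / 4) ^ 2 * 16 from by ring]
      have hb : (18:ℝ)⁻¹ * r = r / 18 := by ring
      linarith
    · rcases min_cases r ((r ^ 3)⁻¹) with ⟨he, _⟩ | ⟨he, _⟩ <;> rw [he]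
      · rw [div_le_iff₀ hr3]
        linarith [hGhigh, show (r ^ 2 / 4) ^ 2 * 16 = r * r ^ 3 from by ring,
          mul_pos hr hr3]
      · rw [show (18:ℝ) * (r ^ 3)⁻¹ = 18 / r ^ 3 from by ring,
          div_le_div_iff₀ hr3 hr3]
        nlinarith [mul_le_mul_of_nonneg_right hGle1 hr3.le]
  · -- large r : r^2/4 ≥ 1
    have hu1 : (1:ℝ) ≤ r ^ 2 / 4 := by nlinarith
    have hGlow : (1:ℝ) / 9 ≤ G := hG_def ▸ oseen_G_ge_big _ hu1
    have hGhigh : G ≤ 1 := by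
      have : 0 ≤ (1 + r ^ 2 / 4) * Real.exp (-(r ^ 2 / 4)) :=
        mul_nonneg (by positivity) (Real.exp_pos _).le
      rw [hG_def]; linarith
    have hinv : (0:ℝ) < (r ^ 3)⁻¹ := by positivity
    have h8 : (8:ℝ) ≤ r ^ 3 := by nlinarith
    have hmin : min r ((r ^ 3)⁻¹) = (r ^ 3)⁻¹ := by
      apply min_eq_right
      have hmul : (r ^ 3)⁻¹ * r ^ 3 = 1 := inv_mul_cancel₀ hr3.ne'
      nlinarith [mul_le_mul_of_nonneg_left h8 hinv.le]
    rw [hmin]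
    constructor
    · rw [show (18:ℝ)⁻¹ * (r ^ 3)⁻¹ = (1 / 18) / r ^ 3 from by ring,
        div_le_div_iff₀ hr3 hr3]
      nlinarith [mul_le_mul_of_nonneg_right hGlow hr3.le]
    · rw [show (18:ℝ) * (r ^ 3)⁻¹ = 18 / r ^ 3 from by ring,
        div_le_div_iff₀ hr3 hr3]
      nlinarith [mul_le_mul_of_nonneg_right hGhigh hr3.le]
end

section
/- Fix r₀ > 0 and let σ(r) = 4(1-e^{-r²/4})/r². Then there exists C > 0 independent of r₀ such that |σ(r) - σ(r₀)| ≥ C^{-1}|r - r₀||σ'(r₀)| for all 0 < r ≤ 2r₀. -/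
open Real

noncomputable def fO (u : ℝ) : ℝ := (1 - Real.exp (-u)) / u
noncomputable def gO (u : ℝ) : ℝ := 1 - (1 + u) * Real.exp (-u)
noncomputable def hO (u : ℝ) : ℝ := gO u / u ^ 2

lemma exp_quad {x : ℝ} (hx : 0 ≤ x) : 1 + x + x ^ 2 / 2 ≤ Real.exp x := by
  have h := Real.sum_le_exp_of_nonneg hx 3
  simp [Finset.sum_range_succ, Nat.factorial] at h
  nlinarith [h]

lemma gO_pos {u : ℝ} (hu : 0 < u) : 0 < gO u := by
  have h := Real.add_one_lt_exp (ne_of_gt hu)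
  have he : 0 < Real.exp (-u) := Real.exp_pos _
  have h2 : (1 + u) * Real.exp (-u) < Real.exp u * Real.exp (-u) :=
    mul_lt_mul_of_pos_right (by linarith) he
  rw [← Real.exp_add] at h2
  simp at h2
  unfold gO; linarith

lemma hasDerivAt_expneg (t : ℝ) : HasDerivAt (fun s : ℝ => Real.exp (-s)) (-Real.exp (-t)) t := by
  exact ((Real.hasDerivAt_exp (-t)).comp t (hasDerivAt_id' t).neg).congr_deriv (by ring)

lemma hasDerivAt_gO (t : ℝ) : HasDerivAt gO (t * Real.exp (-t)) t := by
  have h3 : HasDerivAt (fun s : ℝ => (1 + s) * Real.exp (-s))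
      (1 * Real.exp (-t) + (1 + t) * (-Real.exp (-t))) t :=
    (((hasDerivAt_id' t).const_add 1)).mul (hasDerivAt_expneg t)
  have := (hasDerivAt_const t (1 : ℝ)).sub h3
  refine this.congr_deriv ?_
  ring

lemma hasDerivAt_hO {t : ℝ} (ht : t ≠ 0) :
    HasDerivAt hO ((t * Real.exp (-t) * t ^ 2 - gO t * (2 * t)) / (t ^ 2) ^ 2) t := by
  have hd : HasDerivAt (fun s : ℝ => s ^ 2) ((2 : ℕ) * t ^ 1) t := hasDerivAt_pow 2 t
  have := (hasDerivAt_gO t).div hd (pow_ne_zero 2 ht)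
  refine this.congr_deriv ?_
  push_cast
  ring

lemma gO_mono {a b : ℝ} (ha : 0 ≤ a) (hab : a ≤ b) : gO a ≤ gO b := by
  have hmono : MonotoneOn gO (Set.Icc a b) := by
    apply monotoneOn_of_deriv_nonneg (convex_Icc a b)
    · exact fun t _ => (hasDerivAt_gO t).differentiableAt.continuousAt.continuousWithinAt
    · exact fun t _ => (hasDerivAt_gO t).differentiableAt.differentiableWithinAt
    · intro t ht
      rw [interior_Icc] at ht
      rw [(hasDerivAt_gO t).deriv]
      have : 0 < t := lt_of_le_of_lt ha ht.1
      positivity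
  exact hmono (Set.left_mem_Icc.2 hab) (Set.right_mem_Icc.2 hab) hab

lemma hO_anti {a b : ℝ} (ha : 0 < a) (hab : a ≤ b) : hO b ≤ hO a := by
  have hanti : AntitoneOn hO (Set.Icc a b) := by
    apply antitoneOn_of_deriv_nonpos (convex_Icc a b)
    · intro t ht
      have ht0 : t ≠ 0 := (lt_of_lt_of_le ha ht.1).ne'
      exact (hasDerivAt_hO ht0).differentiableAt.continuousAt.continuousWithinAt
    · intro t ht
      rw [interior_Icc] at ht
      have ht0 : t ≠ 0 := (lt_of_lt_of_le ha ht.1.le).ne'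
      exact (hasDerivAt_hO ht0).differentiableAt.differentiableWithinAt
    · intro t ht
      rw [interior_Icc] at ht
      have htpos : 0 < t := lt_of_le_of_lt ha.le ht.1
      rw [(hasDerivAt_hO htpos.ne').deriv]
      apply div_nonpos_of_nonpos_of_nonneg _ (by positivity)
      have hq := exp_quad htpos.le
      have hee : Real.exp (-t) * Real.exp t = 1 := by
        rw [← Real.exp_add]; simp
      have hep : 0 < Real.exp (-t) := Real.exp_pos _
      unfold gO
      nlinarith [mul_le_mul_of_nonneg_left hq hep.le]
  exact hanti (Set.left_mem_Icc.2 hab) (Set.right_mem_Icc.2 hab) hab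

lemma hasDerivAt_fO {u : ℝ} (hu : u ≠ 0) : HasDerivAt fO (-hO u) u := by
  have hnum : HasDerivAt (fun s : ℝ => 1 - Real.exp (-s)) (Real.exp (-u)) u := by
    have := (hasDerivAt_const u (1 : ℝ)).sub (hasDerivAt_expneg u)
    exact this.congr_deriv (by ring)
  have := hnum.div (hasDerivAt_id' u) hu
  refine this.congr_deriv ?_
  unfold hO gO
  ring

lemma hO_nonneg {u : ℝ} (hu : 0 < u) : 0 ≤ hO u :=
  div_nonneg (gO_pos hu).le (sq_nonneg _)

lemma fO_key {u₀ u : ℝ} (h₀ : 0 < u₀) (hu : 0 < u) (hle : u ≤ 4 * u₀) :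
    hO u₀ / 16 * |u - u₀| ≤ |fO u - fO u₀| := by
  have hn := hO_nonneg h₀
  rcases le_total u u₀ with hc | hc
  · -- u ≤ u₀
    have anti : AntitoneOn (fun t => fO t + hO u₀ * t) (Set.Icc u u₀) := by
      apply antitoneOn_of_deriv_nonpos (convex_Icc u u₀)
      · intro t ht
        have ht0 : t ≠ 0 := (lt_of_lt_of_le hu ht.1).ne'
        exact (((hasDerivAt_fO ht0).add
          ((hasDerivAt_id' t).const_mul (hO u₀))).differentiableAt).continuousAt.continuousWithinAt
      · intro t ht
        rw [interior_Icc] at ht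
        have ht0 : t ≠ 0 := (lt_of_lt_of_le hu ht.1.le).ne' -- t > u > 0
        exact (((hasDerivAt_fO ht0).add
          ((hasDerivAt_id' t).const_mul (hO u₀))).differentiableAt).differentiableWithinAt
      · intro t ht
        rw [interior_Icc] at ht
        have htpos : 0 < t := lt_trans hu ht.1
        rw [HasDerivAt.deriv (f := fun t => fO t + hO u₀ * t) (((hasDerivAt_fO htpos.ne').add ((hasDerivAt_id' t).const_mul (hO u₀))))]
        have := hO_anti htpos ht.2.le
        simp only [mul_one]
        linarith
    have h1 : fO u₀ + hO u₀ * u₀ ≤ fO u + hO u₀ * u :=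
      anti (Set.left_mem_Icc.2 hc) (Set.right_mem_Icc.2 hc) hc
    have hd : hO u₀ * (u₀ - u) ≤ fO u - fO u₀ := by nlinarith
    rw [abs_of_nonpos (by linarith), abs_of_nonneg (by nlinarith)]
    nlinarith
  · -- u₀ ≤ u ≤ 4 u₀
    have anti : AntitoneOn (fun t => fO t + hO u₀ / 16 * t) (Set.Icc u₀ u) := by
      apply antitoneOn_of_deriv_nonpos (convex_Icc u₀ u)
      · intro t ht
        have ht0 : t ≠ 0 := (lt_of_lt_of_le h₀ ht.1).ne'
        exact (((hasDerivAt_fO ht0).add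
          ((hasDerivAt_id' t).const_mul (hO u₀ / 16))).differentiableAt).continuousAt.continuousWithinAt
      · intro t ht
        rw [interior_Icc] at ht
        have ht0 : t ≠ 0 := (lt_trans h₀ ht.1).ne'
        exact (((hasDerivAt_fO ht0).add
          ((hasDerivAt_id' t).const_mul (hO u₀ / 16))).differentiableAt).differentiableWithinAt
      · intro t ht
        rw [interior_Icc] at ht
        have htpos : 0 < t := lt_trans h₀ ht.1
        rw [HasDerivAt.deriv (f := fun t => fO t + hO u₀ / 16 * t) (((hasDerivAt_fO htpos.ne').add ((hasDerivAt_id' t).const_mul (hO u₀ / 16))))]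
        simp only [mul_one]
        -- need hO u₀ / 16 ≤ hO t
        have hg : gO u₀ ≤ gO t := gO_mono h₀.le ht.1.le
        have ht16 : t ^ 2 ≤ 16 * u₀ ^ 2 := by nlinarith [ht.2, hle]
        have hkey : hO u₀ / 16 ≤ hO t := by
          unfold hO
          rw [div_div]
          exact div_le_div₀ (le_trans (gO_pos h₀).le hg) hg (by positivity)
            (by nlinarith)
        linarith
    have h1 : fO u + hO u₀ / 16 * u ≤ fO u₀ + hO u₀ / 16 * u₀ :=
      anti (Set.left_mem_Icc.2 hc) (Set.right_mem_Icc.2 hc) hc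
    have hd : hO u₀ / 16 * (u - u₀) ≤ fO u₀ - fO u := by nlinarith
    rw [abs_of_nonneg (by linarith), abs_of_nonpos (by nlinarith)]
    nlinarith

lemma hasDerivAt_oseen {r : ℝ} (hr : r ≠ 0) :
    HasDerivAt oseenSigma (-8 * gO (r ^ 2 / 4) / r ^ 3) r := by
  have hsq : HasDerivAt (fun s : ℝ => s ^ 2) ((2 : ℕ) * r ^ 1) r := hasDerivAt_pow 2 r
  have h1 : HasDerivAt (fun s : ℝ => -s ^ 2 / 4) (-((2 : ℕ) * r ^ 1) / 4) r :=
    hsq.neg.div_const 4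
  have h2 : HasDerivAt (fun s : ℝ => Real.exp (-s ^ 2 / 4))
      (Real.exp (-r ^ 2 / 4) * (-((2 : ℕ) * r ^ 1) / 4)) r :=
    (Real.hasDerivAt_exp _).comp r h1
  have hnum : HasDerivAt (fun s : ℝ => 4 * (1 - Real.exp (-s ^ 2 / 4)))
      (4 * (0 - Real.exp (-r ^ 2 / 4) * (-((2 : ℕ) * r ^ 1) / 4))) r :=
    (((hasDerivAt_const r (1 : ℝ)).sub h2)).const_mul 4
  have := hnum.div hsq (pow_ne_zero 2 hr)
  refine this.congr_deriv ?_
  unfold gO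
  field_simp
  ring

theorem stmt_12 :
    ∃ C : ℝ, 0 < C ∧ ∀ r₀ : ℝ, 0 < r₀ → ∀ r : ℝ, 0 < r → r ≤ 2 * r₀ →
      |oseenSigma r - oseenSigma r₀| ≥ C⁻¹ * |r - r₀| * |deriv oseenSigma r₀| := by
  refine ⟨32, by norm_num, fun r₀ hr₀ r hr hle => ?_⟩
  set u := r ^ 2 / 4 with hu_def
  set u₀ := r₀ ^ 2 / 4 with hu₀_def
  have hu : 0 < u := by positivity
  have hu₀ : 0 < u₀ := by positivity
  have hule : u ≤ 4 * u₀ := by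
    rw [hu_def, hu₀_def]; nlinarith
  have hσ : ∀ s : ℝ, s ≠ 0 → oseenSigma s = fO (s ^ 2 / 4) := by
    intro s hs
    unfold oseenSigma fO
    rw [neg_div]
    field_simp
  have hder : deriv oseenSigma r₀ = -8 * gO u₀ / r₀ ^ 3 :=
    (hasDerivAt_oseen hr₀.ne').deriv
  have habs : |deriv oseenSigma r₀| = 8 * gO u₀ / r₀ ^ 3 := by
    rw [hder]
    rw [abs_of_nonpos (by
      apply div_nonpos_of_nonpos_of_nonneg
      · nlinarith [gO_pos hu₀]
      · exact pow_nonneg hr₀.le 3)]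
    ring
  rw [hσ r hr.ne', hσ r₀ hr₀.ne', habs]
  have hkey := fO_key hu₀ hu hule
  have hhO : hO u₀ = 16 * gO u₀ / r₀ ^ 4 := by
    unfold hO
    rw [hu₀_def]
    field_simp
    ring
  have huu : |u - u₀| = |r - r₀| * (r + r₀) / 4 := by
    have h4 : u - u₀ = (r - r₀) * (r + r₀) / 4 := by rw [hu_def, hu₀_def]; ring
    rw [h4, abs_div, abs_mul, abs_of_nonneg (show (0:ℝ) ≤ r + r₀ by positivity)]
    norm_num
  refine le_trans ?_ hkey
  rw [hhO, huu]
  have hg := gO_pos hu₀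
  have hab : 0 ≤ |r - r₀| := abs_nonneg _
  have e1 : (32:ℝ)⁻¹ * |r - r₀| * (8 * gO u₀ / r₀ ^ 3) = gO u₀ * |r - r₀| / (4 * r₀ ^ 3) := by
    field_simp; ring
  have e2 : 16 * gO u₀ / r₀ ^ 4 / 16 * (|r - r₀| * (r + r₀) / 4) =
      gO u₀ * |r - r₀| * (r + r₀) / (4 * r₀ ^ 4) := by
    field_simp
  rw [e1, e2, div_le_div_iff₀ (by positivity) (by positivity)]
  nlinarith [mul_nonneg (mul_nonneg hg.le hab) (mul_pos hr (pow_pos hr₀ 3)).le]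
end

section
/- Let |k| ≥ 1, g(r) = e^{-r²/8}, σ(r) = 4(1-e^{-r²/4})/r², and K̃_k[h](r) = (1/(2|k|))∫_0^∞ min(r/s,s/r)^{|k|}(rs)^{1/2}h(s)ds. Then for all w ∈ L²(0,∞), 0 ≤ Re⟨g K̃_k[g w], w⟩ ≤ (1/|k|)∫_0^∞ σ(s)|w(s)|² ds. In particular the operator w ↦ g K̃_k[g w] is nonnegative and bounded above by σ(r)/|k|. -/
open Real MeasureTheory Set

-- integrability of s^m * exp(-s^2/4) on Ioi 0
lemma integrableOn_pow_mul_exp (m : ℕ) :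
    IntegrableOn (fun s : ℝ => s ^ m * Real.exp (-s ^ 2 / 4)) (Ioi 0) := by
  have h := integrableOn_rpow_mul_exp_neg_mul_rpow (p := 2) (s := (m : ℝ)) (b := 1/4)
    (lt_of_lt_of_le neg_one_lt_zero (Nat.cast_nonneg m)) two_pos (by norm_num)
  refine h.congr_fun (fun x hx => ?_) measurableSet_Ioi
  have hx0 : (0:ℝ) < x := hx
  rw [← Real.rpow_natCast x m]
  congr 1
  rw [show ((2:ℝ)) = ((2:ℕ):ℝ) by norm_num, Real.rpow_natCast]
  ring_nf
  rw [Real.rpow_natCast, Real.rpow_two]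

lemma deriv1 (s : ℝ) : HasDerivAt (fun s : ℝ => -(2 * s ^ 2 + 8) * Real.exp (-s ^ 2 / 4))
    (s ^ 3 * Real.exp (-s ^ 2 / 4)) s := by
  have h1 : HasDerivAt (fun s : ℝ => -s ^ 2 / 4) (-s / 2) s := by
    have := ((hasDerivAt_pow 2 s).neg).div_const 4
    simpa using this.congr_deriv (by ring)
  have h2 : HasDerivAt (fun s : ℝ => Real.exp (-s ^ 2 / 4)) (Real.exp (-s ^ 2 / 4) * (-s / 2)) s :=
    (Real.hasDerivAt_exp _).comp s h1
  have h3 : HasDerivAt (fun s : ℝ => -(2 * s ^ 2 + 8)) (-(4 * s)) s := by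
    have := (((hasDerivAt_pow 2 s).const_mul 2).add_const 8).neg
    exact this.congr_deriv (by norm_num; ring)
  exact (h3.mul h2).congr_deriv (by ring)

lemma deriv2 (s : ℝ) : HasDerivAt (fun s : ℝ => -2 * Real.exp (-s ^ 2 / 4))
    (s * Real.exp (-s ^ 2 / 4)) s := by
  have h1 : HasDerivAt (fun s : ℝ => -s ^ 2 / 4) (-s / 2) s := by
    have := ((hasDerivAt_pow 2 s).neg).div_const 4
    simpa using this.congr_deriv (by ring)
  have h2 : HasDerivAt (fun s : ℝ => Real.exp (-s ^ 2 / 4)) (Real.exp (-s ^ 2 / 4) * (-s / 2)) s :=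
    (Real.hasDerivAt_exp _).comp s h1
  simpa using (h2.const_mul (-2)).congr_deriv (by ring)

lemma int1 (r : ℝ) (hr : 0 < r) :
    ∫ s in (0:ℝ)..r, s ^ 3 * Real.exp (-s ^ 2 / 4) = 8 - (2 * r ^ 2 + 8) * Real.exp (-r ^ 2 / 4) := by
  rw [intervalIntegral.integral_eq_sub_of_hasDerivAt (fun x _ => deriv1 x)]
  · norm_num; ring
  · apply ContinuousOn.intervalIntegrable
    fun_prop

lemma int2 (r : ℝ) (hr : 0 < r) :
    ∫ s in Ioi r, s * Real.exp (-s ^ 2 / 4) = 2 * Real.exp (-r ^ 2 / 4) := by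
  have hint : IntegrableOn (fun s : ℝ => s * Real.exp (-s ^ 2 / 4)) (Ioi r) := by
    have := (integrableOn_pow_mul_exp 1).mono_set (Ioi_subset_Ioi hr.le)
    simpa using this
  have := integral_Ioi_of_hasDerivAt_of_tendsto (f := fun s : ℝ => -2 * Real.exp (-s ^ 2 / 4))
    (f' := fun s => s * Real.exp (-s ^ 2 / 4)) (a := r) (m := 0)
    (Continuous.continuousWithinAt (by fun_prop)) (fun x _ => deriv2 x) hint ?_
  · rw [this]; ring
  · have : Filter.Tendsto (fun s : ℝ => -s ^ 2 / 4) Filter.atTop Filter.atBot := by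
      apply Filter.Tendsto.atBot_div_const (by norm_num)
      exact Filter.tendsto_neg_atBot_iff.mpr (Filter.tendsto_pow_atTop (by norm_num))
    have h2 := Real.tendsto_exp_atBot.comp this
    simpa using h2.const_mul (-2)

lemma min_eq_left_of (r s : ℝ) (hr : 0 < r) (hs : 0 < s) (h : s ≤ r) :
    min (r/s) (s/r) = s/r := by
  apply min_eq_right
  rw [div_le_div_iff₀ hr hs]
  nlinarith

lemma sigma_int (r : ℝ) (hr : 0 < r) :
    IntegrableOn (fun s => min (r/s) (s/r) * (s^2/r) * Real.exp (-s^2/4)) (Ioi 0) ∧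
    ∫ s in Ioi (0:ℝ), min (r/s) (s/r) * (s^2/r) * Real.exp (-s^2/4) = 2 * oseenSigma r := by
  have hE1 : EqOn (fun s : ℝ => min (r/s) (s/r) * (s^2/r) * Real.exp (-s^2/4))
      (fun s : ℝ => (1/r^2) * (s^3 * Real.exp (-s^2/4))) (Ioc 0 r) := by
    intro s hs
    simp only
    rw [min_eq_left_of r s hr hs.1 hs.2]
    field_simp
  have hE2 : EqOn (fun s : ℝ => min (r/s) (s/r) * (s^2/r) * Real.exp (-s^2/4))
      (fun s : ℝ => s * Real.exp (-s^2/4)) (Ioi r) := by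
    intro s hs
    have hs0 : 0 < s := hr.trans hs
    simp only
    rw [min_eq_left (by rw [div_le_div_iff₀ hs0 hr]; nlinarith [le_of_lt (mem_Ioi.mp hs)])]
    field_simp
  have h1 : IntegrableOn (fun s => min (r/s) (s/r) * (s^2/r) * Real.exp (-s^2/4)) (Ioc 0 r) := by
    refine (IntegrableOn.congr_fun ?_ hE1.symm measurableSet_Ioc)
    exact (Continuous.integrableOn_Ioc (by fun_prop))
  have h2 : IntegrableOn (fun s => min (r/s) (s/r) * (s^2/r) * Real.exp (-s^2/4)) (Ioi r) := by
    refine (IntegrableOn.congr_fun ?_ hE2.symm measurableSet_Ioi)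
    have := (integrableOn_pow_mul_exp 1).mono_set (Ioi_subset_Ioi hr.le)
    simpa using this
  have hsplit : Ioc (0:ℝ) r ∪ Ioi r = Ioi 0 := Ioc_union_Ioi_eq_Ioi hr.le
  constructor
  · rw [← hsplit]; exact h1.union h2
  · rw [← hsplit, setIntegral_union (Ioc_disjoint_Ioi le_rfl) measurableSet_Ioi h1 h2,
      setIntegral_congr_fun measurableSet_Ioc hE1, setIntegral_congr_fun measurableSet_Ioi hE2]
    rw [integral_const_mul, ← intervalIntegral.integral_of_le hr.le, int1 r hr, int2 r hr]
    have hr2 : r^2 ≠ 0 := by positivity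
    rw [oseenSigma]
    field_simp
    ring

noncomputable def oseenG (r : ℝ) : ℝ := Real.exp (-r ^ 2 / 8)

noncomputable def greenK (k : ℤ) (r s : ℝ) : ℝ :=
  1 / (2 * |(k : ℝ)|) * min (r / s) (s / r) ^ |k|.toNat * Real.sqrt (r * s)

lemma oseenG_pos (r : ℝ) : 0 < oseenG r := Real.exp_pos _
lemma oseenG_le_one (r : ℝ) : oseenG r ≤ 1 := Real.exp_le_one_iff.mpr (by nlinarith [sq_nonneg r])
lemma oseenG_sq (r : ℝ) : oseenG r ^ 2 = Real.exp (-r ^ 2 / 4) := by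
  rw [oseenG, ← Real.exp_nat_mul]; ring_nf

lemma sigma_nonneg (r : ℝ) : 0 ≤ oseenSigma r := by
  unfold oseenSigma
  have h1 : Real.exp (-r ^ 2 / 4) ≤ 1 := Real.exp_le_one_iff.mpr (by nlinarith [sq_nonneg r])
  exact div_nonneg (by nlinarith) (sq_nonneg r)

lemma sigma_le_one (r : ℝ) (hr : 0 < r) : oseenSigma r ≤ 1 := by
  unfold oseenSigma
  rw [div_le_one (pow_pos hr 2)]
  have h := Real.add_one_le_exp (-(r ^ 2 / 4))
  have h2 : -(r ^ 2 / 4) = -r ^ 2 / 4 := by ring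
  rw [h2] at h
  nlinarith [h]

lemma min_div_le_one {r s : ℝ} (hr : 0 < r) (hs : 0 < s) : min (r / s) (s / r) ≤ 1 := by
  rcases le_total r s with h | h
  · exact le_trans (min_le_left _ _) (by rw [div_le_one hs]; exact h)
  · exact le_trans (min_le_right _ _) (by rw [div_le_one hr]; exact h)

lemma min_div_nonneg {r s : ℝ} (hr : 0 < r) (hs : 0 < s) : 0 ≤ min (r / s) (s / r) :=
  le_min (by positivity) (by positivity)

lemma min_div_eq {r s : ℝ} (hr : 0 < r) (hs : 0 < s) :
    min (r / s) (s / r) = (min r s) ^ 2 / (r * s) := by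
  rcases le_total r s with h | h
  · rw [min_eq_left (by rw [div_le_div_iff₀ hs hr]; nlinarith), min_eq_left h]
    field_simp
  · rw [min_eq_right (by rw [div_le_div_iff₀ hr hs]; nlinarith), min_eq_right h]
    field_simp

lemma abs_cast_eq (k : ℤ) : |(k : ℝ)| = (|k|.toNat : ℝ) := by
  rw [← Int.cast_abs, ← Int.toNat_of_nonneg (abs_nonneg k)]
  push_cast
  rw [Int.toNat_of_nonneg (abs_nonneg k)]

lemma abs_cast_pos (k : ℤ) (hk : 1 ≤ |k|) : (1:ℝ) ≤ |(k : ℝ)| := by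
  rw [← Int.cast_abs]; exact_mod_cast hk

lemma one_le_toNat (k : ℤ) (hk : 1 ≤ |k|) : 1 ≤ |k|.toNat :=
  (Int.le_toNat (abs_nonneg k)).mpr hk

lemma greenK_nonneg (k : ℤ) {r s : ℝ} (hr : 0 < r) (hs : 0 < s) : 0 ≤ greenK k r s := by
  unfold greenK
  have h1 := min_div_nonneg hr hs
  have h2 : (0:ℝ) ≤ |(k:ℝ)| := abs_nonneg _
  positivity

lemma greenK_le (k : ℤ) (hk : 1 ≤ |k|) {r s : ℝ} (hr : 0 < r) (hs : 0 < s) :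
    greenK k r s ≤ 1 / (2 * |(k : ℝ)|) * (min (r / s) (s / r) * Real.sqrt (r * s)) := by
  unfold greenK
  have h1 := min_div_nonneg hr hs
  have h2 := min_div_le_one hr hs
  have h3 : min (r / s) (s / r) ^ |k|.toNat ≤ min (r / s) (s / r) := by
    calc min (r / s) (s / r) ^ |k|.toNat ≤ min (r / s) (s / r) ^ 1 :=
      pow_le_pow_of_le_one h1 h2 (one_le_toNat k hk)
    _ = _ := pow_one _
  have h4 : (0:ℝ) < |(k:ℝ)| := lt_of_lt_of_le one_pos (abs_cast_pos k hk)
  have h5 : (0:ℝ) ≤ Real.sqrt (r * s) := Real.sqrt_nonneg _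
  rw [mul_assoc]
  apply mul_le_mul_of_nonneg_left _ (by positivity)
  exact mul_le_mul_of_nonneg_right h3 h5

lemma amgm (k : ℤ) (hk : 1 ≤ |k|) {r s : ℝ} (hr : 0 < r) (hs : 0 < s) (a b : ℝ) :
    |greenK k r s * (oseenG s * b) * (oseenG r * a)| ≤
    1 / (4 * |(k : ℝ)|) * (min (r/s) (s/r) * (r^2/s) * Real.exp (-r^2/4) * b^2
      + min (r/s) (s/r) * (s^2/r) * Real.exp (-s^2/4) * a^2) := by
  have hK0 := greenK_nonneg k hr hs
  have hgr := oseenG_pos r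
  have hgs := oseenG_pos s
  have habs : |greenK k r s * (oseenG s * b) * (oseenG r * a)| =
      greenK k r s * (oseenG s * |b|) * (oseenG r * |a|) := by
    rw [abs_mul, abs_mul, abs_mul, abs_mul, abs_of_nonneg hK0,
      abs_of_nonneg hgr.le, abs_of_nonneg hgs.le]
  rw [habs]
  have hKle := greenK_le k hk hr hs
  have h4 : (0:ℝ) < |(k:ℝ)| := lt_of_lt_of_le one_pos (abs_cast_pos k hk)
  -- key quadratic inequality
  set m := min (r/s) (s/r) with hm
  have hm0 : 0 ≤ m := min_div_nonneg hr hs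
  have key : Real.sqrt (r * s) * (oseenG s * |b|) * (oseenG r * |a|) ≤
      (1/2) * ((r^2/s) * Real.exp (-r^2/4) * b^2 + (s^2/r) * Real.exp (-s^2/4) * a^2) := by
    set x := Real.sqrt (r^2/s) with hx
    set y := Real.sqrt (s^2/r) with hy
    have hx2 : x ^ 2 = r^2/s := Real.sq_sqrt (by positivity)
    have hy2 : y ^ 2 = s^2/r := Real.sq_sqrt (by positivity)
    have hxy : x * y = Real.sqrt (r * s) := by
      rw [hx, hy, ← Real.sqrt_mul (by positivity)]
      congr 1
      field_simp
    have hger : oseenG r ^ 2 = Real.exp (-r^2/4) := oseenG_sq r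
    have hges : oseenG s ^ 2 = Real.exp (-s^2/4) := oseenG_sq s
    have ha2 : |a|^2 = a^2 := sq_abs a
    have hb2 : |b|^2 = b^2 := sq_abs b
    have e1 : Real.sqrt (r * s) * (oseenG s * |b|) * (oseenG r * |a|)
        = (x * oseenG r * |b|) * (y * oseenG s * |a|) := by rw [← hxy]; ring
    have e2 : (r^2/s) * Real.exp (-r^2/4) * b^2 = (x * oseenG r * |b|)^2 := by
      rw [mul_pow, mul_pow, hx2, hger, hb2]
    have e3 : (s^2/r) * Real.exp (-s^2/4) * a^2 = (y * oseenG s * |a|)^2 := by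
      rw [mul_pow, mul_pow, hy2, hges, ha2]
    rw [e1, e2, e3]
    nlinarith [sq_nonneg (x * oseenG r * |b| - y * oseenG s * |a|)]
  have step1 : greenK k r s * (oseenG s * |b|) * (oseenG r * |a|) ≤
      1 / (2 * |(k:ℝ)|) * (m * (Real.sqrt (r * s) * (oseenG s * |b|) * (oseenG r * |a|))) := by
    have hnn : 0 ≤ (oseenG s * |b|) * (oseenG r * |a|) := by positivity
    calc greenK k r s * (oseenG s * |b|) * (oseenG r * |a|)
        = greenK k r s * ((oseenG s * |b|) * (oseenG r * |a|)) := by ring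
      _ ≤ (1 / (2 * |(k:ℝ)|) * (m * Real.sqrt (r * s))) * ((oseenG s * |b|) * (oseenG r * |a|)) :=
          mul_le_mul_of_nonneg_right hKle hnn
      _ = 1 / (2 * |(k:ℝ)|) * (m * (Real.sqrt (r * s) * (oseenG s * |b|) * (oseenG r * |a|))) := by
          ring
  refine step1.trans ?_
  have step2 : m * (Real.sqrt (r * s) * (oseenG s * |b|) * (oseenG r * |a|)) ≤
      m * ((1/2) * ((r^2/s) * Real.exp (-r^2/4) * b^2 + (s^2/r) * Real.exp (-s^2/4) * a^2)) :=
    mul_le_mul_of_nonneg_left key hm0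
  calc 1 / (2 * |(k:ℝ)|) * (m * (Real.sqrt (r * s) * (oseenG s * |b|) * (oseenG r * |a|)))
      ≤ 1 / (2 * |(k:ℝ)|) * (m * ((1/2) * ((r^2/s) * Real.exp (-r^2/4) * b^2
          + (s^2/r) * Real.exp (-s^2/4) * a^2))) :=
        mul_le_mul_of_nonneg_left step2 (by positivity)
    _ = 1 / (4 * |(k:ℝ)|) * (m * (r^2/s) * Real.exp (-r^2/4) * b^2
          + m * (s^2/r) * Real.exp (-s^2/4) * a^2) := by
        field_simp
        ring

noncomputable def Dfun (v : ℝ → ℝ) (r s : ℝ) : ℝ :=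
  min (r/s) (s/r) * (s^2/r) * Real.exp (-s^2/4) * v r ^ 2

lemma Dfun_nonneg (v : ℝ → ℝ) {r s : ℝ} (hr : 0 < r) (hs : 0 < s) : 0 ≤ Dfun v r s := by
  unfold Dfun
  have := min_div_nonneg hr hs
  positivity

lemma measD (v : ℝ → ℝ) (hm : Measurable v) : Measurable (Function.uncurry (Dfun v)) := by
  unfold Dfun Function.uncurry
  apply Measurable.mul
  apply Measurable.mul
  apply Measurable.mul
  · exact (measurable_fst.div measurable_snd).min (measurable_snd.div measurable_fst)
  · fun_prop
  · fun_prop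
  · fun_prop

lemma hv2 (v : ℝ → ℝ) (hv : MemLp v 2 (volume.restrict (Ioi (0:ℝ)))) :
    Integrable (fun r => v r ^ 2) (volume.restrict (Ioi (0:ℝ))) :=
  (memLp_two_iff_integrable_sq hv.aestronglyMeasurable).mp hv

lemma D1 (v : ℝ → ℝ) {r : ℝ} (hr : 0 < r) :
    IntegrableOn (fun s => Dfun v r s) (Ioi 0) := by
  unfold Dfun
  exact (sigma_int r hr).1.mul_const _

lemma D1val (v : ℝ → ℝ) {r : ℝ} (hr : 0 < r) :
    ∫ s in Ioi (0:ℝ), Dfun v r s = 2 * oseenSigma r * v r ^ 2 := by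
  unfold Dfun
  rw [integral_mul_const, (sigma_int r hr).2]

lemma min_div_div_le {r s : ℝ} (hr : 0 < r) (hs : 0 < s) :
    min (s/r) (r/s) * (r^2/s) ≤ r := by
  rcases le_total s r with h | h
  · rw [min_eq_left (by rw [div_le_div_iff₀ hr hs]; nlinarith)]
    rw [div_mul_div_comm, div_le_iff₀ (by positivity)]
    ring_nf
    nlinarith
  · rw [min_eq_right (by rw [div_le_div_iff₀ hs hr]; nlinarith)]
    rw [div_mul_div_comm, div_le_iff₀ (by positivity)]
    nlinarith [mul_nonneg (mul_nonneg hr.le (sub_nonneg.mpr h)) (by linarith : (0:ℝ) ≤ s + r)]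

lemma Dflip_le (v : ℝ → ℝ) {r s : ℝ} (hr : 0 < r) (hs : 0 < s) :
    Dfun v s r ≤ r * Real.exp (-r^2/4) * v s ^ 2 := by
  unfold Dfun
  have h1 := min_div_div_le hr hs
  have h2 : (0:ℝ) ≤ Real.exp (-r^2/4) * v s ^ 2 := by positivity
  calc min (s/r) (r/s) * (r^2/s) * Real.exp (-r^2/4) * v s ^ 2
      = (min (s/r) (r/s) * (r^2/s)) * (Real.exp (-r^2/4) * v s ^ 2) := by ring
    _ ≤ r * (Real.exp (-r^2/4) * v s ^ 2) := mul_le_mul_of_nonneg_right h1 h2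
    _ = r * Real.exp (-r^2/4) * v s ^ 2 := by ring

lemma D2 (v : ℝ → ℝ) (hm : Measurable v) (hv : MemLp v 2 (volume.restrict (Ioi (0:ℝ))))
    {r : ℝ} (hr : 0 < r) :
    IntegrableOn (fun s => Dfun v s r) (Ioi 0) := by
  apply Integrable.mono' ((hv2 v hv).const_mul (r * Real.exp (-r^2/4)))
  · exact ((measD v hm).comp (measurable_id.prodMk measurable_const)).aestronglyMeasurable
  · filter_upwards [ae_restrict_mem measurableSet_Ioi] with s hs
    rw [Real.norm_eq_abs, abs_of_nonneg (Dfun_nonneg v hs hr)]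
    exact Dflip_le v hr hs

lemma sigma_meas : Measurable oseenSigma := by
  unfold oseenSigma; fun_prop

lemma sigmavsq_int (v : ℝ → ℝ) (hm : Measurable v) (hv : MemLp v 2 (volume.restrict (Ioi (0:ℝ)))) :
    Integrable (fun r => 2 * oseenSigma r * v r ^ 2) (volume.restrict (Ioi (0:ℝ))) := by
  apply Integrable.mono' ((hv2 v hv).const_mul 2)
  · exact ((sigma_meas.const_mul 2).mul (hm.pow_const 2)).aestronglyMeasurable
  · filter_upwards [ae_restrict_mem measurableSet_Ioi] with r hr
    rw [Real.norm_eq_abs, abs_of_nonneg (mul_nonneg (mul_nonneg (by norm_num) (sigma_nonneg r))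
      (sq_nonneg _))]
    have h1 := sigma_le_one r hr
    nlinarith [sq_nonneg (v r), sigma_nonneg r]

lemma Dprod (v : ℝ → ℝ) (hm : Measurable v) (hv : MemLp v 2 (volume.restrict (Ioi (0:ℝ)))) :
    Integrable (Function.uncurry (Dfun v))
      ((volume.restrict (Ioi (0:ℝ))).prod (volume.restrict (Ioi (0:ℝ)))) := by
  rw [integrable_prod_iff (measD v hm).aestronglyMeasurable]
  constructor
  · filter_upwards [ae_restrict_mem measurableSet_Ioi] with r hr
    exact D1 v hr
  · apply Integrable.congr (sigmavsq_int v hm hv)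
    filter_upwards [ae_restrict_mem measurableSet_Ioi] with r hr
    rw [← D1val v hr]
    apply integral_congr_ae
    filter_upwards [ae_restrict_mem measurableSet_Ioi] with s hs
    simp only [Function.uncurry_apply_pair]
    rw [Real.norm_eq_abs, abs_of_nonneg (Dfun_nonneg v hr hs)]

lemma Dprodflip (v : ℝ → ℝ) (hm : Measurable v) (hv : MemLp v 2 (volume.restrict (Ioi (0:ℝ)))) :
    Integrable (Function.uncurry (fun r s => Dfun v s r))
      ((volume.restrict (Ioi (0:ℝ))).prod (volume.restrict (Ioi (0:ℝ)))) := by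
  have hmeas : Measurable (Function.uncurry (fun r s => Dfun v s r)) :=
    (measD v hm).comp measurable_swap
  rw [integrable_prod_iff hmeas.aestronglyMeasurable]
  constructor
  · filter_upwards [ae_restrict_mem measurableSet_Ioi] with r hr
    exact D2 v hm hv hr
  · set C := ∫ s in Ioi (0:ℝ), v s ^ 2 with hC
    have hC0 : 0 ≤ C := setIntegral_nonneg measurableSet_Ioi (fun s _ => sq_nonneg _)
    have hmaj : Integrable (fun r => r * Real.exp (-r^2/4) * C) (volume.restrict (Ioi (0:ℝ))) := by
      have h0 : IntegrableOn (fun x : ℝ => x ^ 1 * Real.exp (-x^2/4) * C) (Ioi 0) :=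
        (integrableOn_pow_mul_exp 1).mul_const C
      exact h0.congr_fun (fun r _ => by simp [pow_one]) measurableSet_Ioi
    apply Integrable.mono' hmaj
    · exact (hmeas.norm.aestronglyMeasurable.integral_prod_right')
    · filter_upwards [ae_restrict_mem measurableSet_Ioi] with r hr
      have hnn : 0 ≤ ∫ s in Ioi (0:ℝ), ‖Dfun v s r‖ :=
        setIntegral_nonneg measurableSet_Ioi (fun s _ => norm_nonneg _)
      simp only [Function.uncurry_apply_pair]
      rw [Real.norm_eq_abs, abs_of_nonneg hnn]
      have hle : ∀ᵐ s ∂(volume.restrict (Ioi (0:ℝ))),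
          ‖Dfun v s r‖ ≤ r * Real.exp (-r^2/4) * v s ^ 2 := by
        filter_upwards [ae_restrict_mem measurableSet_Ioi] with s hs
        rw [Real.norm_eq_abs, abs_of_nonneg (Dfun_nonneg v hs hr)]
        exact Dflip_le v hr hs
      calc (∫ s in Ioi (0:ℝ), ‖Dfun v s r‖)
          ≤ ∫ s in Ioi (0:ℝ), r * Real.exp (-r^2/4) * v s ^ 2 :=
            integral_mono_ae (D2 v hm hv hr).norm ((hv2 v hv).const_mul _) hle
        _ = r * Real.exp (-r^2/4) * C := by rw [integral_const_mul]

lemma Dswap (v : ℝ → ℝ) (hm : Measurable v) (hv : MemLp v 2 (volume.restrict (Ioi (0:ℝ)))) :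
    ∫ r in Ioi (0:ℝ), (∫ s in Ioi (0:ℝ), Dfun v s r) =
      ∫ s in Ioi (0:ℝ), 2 * oseenSigma s * v s ^ 2 := by
  rw [integral_integral_swap (Dprodflip v hm hv)]
  apply integral_congr_ae
  filter_upwards [ae_restrict_mem measurableSet_Ioi] with s hs
  exact D1val v hs

lemma measG : Measurable oseenG := by unfold oseenG; fun_prop

lemma measK (k : ℤ) : Measurable (fun z : ℝ × ℝ => greenK k z.1 z.2) := by
  unfold greenK
  apply Measurable.mul
  apply Measurable.mul
  · fun_prop
  · exact ((measurable_fst.div measurable_snd).min (measurable_snd.div measurable_fst)).pow_const _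
  · exact (measurable_fst.mul measurable_snd).sqrt

lemma greenK_abs_le (k : ℤ) (hk : 1 ≤ |k|) {r s : ℝ} (hr : 0 < r) (hs : 0 < s) :
    |greenK k r s| ≤ 1/2 * (Real.sqrt r * Real.sqrt s) := by
  rw [abs_of_nonneg (greenK_nonneg k hr hs)]
  unfold greenK
  rw [Real.sqrt_mul hr.le]
  have h1 : min (r/s) (s/r) ^ |k|.toNat ≤ 1 :=
    pow_le_one₀ (min_div_nonneg hr hs) (min_div_le_one hr hs)
  have h2 : 1 / (2 * |(k:ℝ)|) ≤ 1/2 := by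
    apply div_le_div_of_nonneg_left one_pos.le (by norm_num)
    · linarith [abs_cast_pos k hk]
  calc 1 / (2 * |(k:ℝ)|) * min (r/s) (s/r) ^ |k|.toNat * (Real.sqrt r * Real.sqrt s)
      ≤ (1/2 * 1) * (Real.sqrt r * Real.sqrt s) := by
        apply mul_le_mul_of_nonneg_right _ (by positivity)
        apply mul_le_mul h2 h1 (by positivity) (by norm_num)
    _ = 1/2 * (Real.sqrt r * Real.sqrt s) := by ring
  
lemma base2 : MemLp (fun s => Real.sqrt s * oseenG s) 2 (volume.restrict (Ioi (0:ℝ))) := by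
  rw [memLp_two_iff_integrable_sq (show Measurable (fun s => Real.sqrt s * oseenG s) from Real.continuous_sqrt.measurable.mul measG).aestronglyMeasurable]
  have h0 : IntegrableOn (fun s : ℝ => s ^ 1 * Real.exp (-s^2/4)) (Ioi 0) :=
    integrableOn_pow_mul_exp 1
  apply h0.congr_fun ?_ measurableSet_Ioi
  intro s hs
  simp only
  rw [mul_pow, Real.sq_sqrt (le_of_lt hs), oseenG_sq, pow_one]

lemma innerInt (k : ℤ) (hk : 1 ≤ |k|) (v : ℝ → ℝ) (hm : Measurable v)
    (hv : MemLp v 2 (volume.restrict (Ioi (0:ℝ)))) {r : ℝ} (hr : 0 < r) :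
    Integrable (fun s => greenK k r s * (oseenG s * v s)) (volume.restrict (Ioi (0:ℝ))) := by
  have hφmeas : AEStronglyMeasurable (fun s => greenK k r s * oseenG s)
      (volume.restrict (Ioi (0:ℝ))) := by
    apply Measurable.aestronglyMeasurable
    exact (((measK k).comp (measurable_const.prodMk measurable_id)).mul measG)
  have hφ : MemLp (fun s => greenK k r s * oseenG s) 2 (volume.restrict (Ioi (0:ℝ))) := by
    apply MemLp.of_le (base2.const_mul (1/2 * Real.sqrt r)) hφmeas
    filter_upwards [ae_restrict_mem measurableSet_Ioi] with s hs
    rw [Real.norm_eq_abs, Real.norm_eq_abs, abs_mul]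
    have h1 := greenK_abs_le k hk hr hs
    have h2 : |oseenG s| = oseenG s := abs_of_pos (oseenG_pos s)
    have h3 : 1/2 * Real.sqrt r * (Real.sqrt s * oseenG s) =
        (1/2 * (Real.sqrt r * Real.sqrt s)) * oseenG s := by ring
    calc |greenK k r s| * |oseenG s| ≤ 1/2 * (Real.sqrt r * Real.sqrt s) * oseenG s := by
          rw [h2]; exact mul_le_mul_of_nonneg_right h1 (oseenG_pos s).le
      _ ≤ |1/2 * Real.sqrt r * (Real.sqrt s * oseenG s)| := by
          rw [h3]; exact le_abs_self _
  have harith : (1:ENNReal)/1 = 1/2 + 1/2 := by simp; rw [ENNReal.inv_two_add_inv_two]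
  have hsmul : MemLp ((fun s => greenK k r s * oseenG s) • v) 1 (volume.restrict (Ioi (0:ℝ))) :=
    MemLp.smul hv hφ
  have := memLp_one_iff_integrable.mp hsmul
  apply this.congr
  filter_upwards with s
  simp only [Pi.smul_apply', Pi.smul_apply, smul_eq_mul]
  ring

lemma measP (k : ℤ) (v : ℝ → ℝ) (hm : Measurable v) :
    Measurable (fun z : ℝ × ℝ =>
      greenK k z.1 z.2 * (oseenG z.2 * v z.2) * (oseenG z.1 * v z.1)) :=
  ((measK k).mul ((measG.comp measurable_snd).mul (hm.comp measurable_snd))).mul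
    ((measG.comp measurable_fst).mul (hm.comp measurable_fst))

lemma ae_prod_mem : ∀ᵐ z ∂((volume.restrict (Ioi (0:ℝ))).prod (volume.restrict (Ioi (0:ℝ)))),
    0 < z.1 ∧ 0 < z.2 := by
  rw [Measure.prod_restrict]
  filter_upwards [ae_restrict_mem (measurableSet_Ioi.prod measurableSet_Ioi)] with z hz
  exact ⟨hz.1, hz.2⟩

lemma amgmD (k : ℤ) (hk : 1 ≤ |k|) (v : ℝ → ℝ) {r s : ℝ} (hr : 0 < r) (hs : 0 < s) :
    |greenK k r s * (oseenG s * v s) * (oseenG r * v r)| ≤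
      1 / (4 * |(k : ℝ)|) * (Dfun v s r + Dfun v r s) := by
  have h := amgm k hk hr hs (v r) (v s)
  have heq : min (r/s) (s/r) * (r^2/s) * Real.exp (-r^2/4) * v s ^ 2
      + min (r/s) (s/r) * (s^2/r) * Real.exp (-s^2/4) * v r ^ 2
      = Dfun v s r + Dfun v r s := by
    unfold Dfun
    rw [min_comm (s/r) (r/s)]
  rw [heq] at h
  exact h

lemma Pprod (k : ℤ) (hk : 1 ≤ |k|) (v : ℝ → ℝ) (hm : Measurable v)
    (hv : MemLp v 2 (volume.restrict (Ioi (0:ℝ)))) :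
    Integrable (fun z : ℝ × ℝ =>
        greenK k z.1 z.2 * (oseenG z.2 * v z.2) * (oseenG z.1 * v z.1))
      ((volume.restrict (Ioi (0:ℝ))).prod (volume.restrict (Ioi (0:ℝ)))) := by
  have hmaj : Integrable (fun z : ℝ × ℝ =>
      1 / (4 * |(k : ℝ)|) * (Dfun v z.2 z.1 + Dfun v z.1 z.2))
      ((volume.restrict (Ioi (0:ℝ))).prod (volume.restrict (Ioi (0:ℝ)))) :=
    (((Dprodflip v hm hv).add (Dprod v hm hv)).const_mul _)
  apply Integrable.mono' hmaj (measP k v hm).aestronglyMeasurable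
  filter_upwards [ae_prod_mem] with z hz
  rw [Real.norm_eq_abs]
  exact amgmD k hk v hz.1 hz.2

lemma upper (k : ℤ) (hk : 1 ≤ |k|) (v : ℝ → ℝ) (hm : Measurable v)
    (hv : MemLp v 2 (volume.restrict (Ioi (0:ℝ)))) :
    (∫ r in Ioi (0:ℝ),
        (∫ s in Ioi (0:ℝ), greenK k r s * (oseenG s * v s)) * (oseenG r * v r)) ≤
      1 / |(k : ℝ)| * ∫ s in Ioi (0:ℝ), oseenSigma s * v s ^ 2 := by
  have hk0 : (0:ℝ) < |(k:ℝ)| := lt_of_lt_of_le one_pos (abs_cast_pos k hk)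
  have hF : ∀ᵐ r ∂(volume.restrict (Ioi (0:ℝ))),
      ‖(∫ s in Ioi (0:ℝ), greenK k r s * (oseenG s * v s)) * (oseenG r * v r)‖ ≤
      1 / (4 * |(k:ℝ)|) * (2 * oseenSigma r * v r ^ 2 + ∫ s in Ioi (0:ℝ), Dfun v s r) := by
    filter_upwards [ae_restrict_mem measurableSet_Ioi] with r hr
    have hIneg : Integrable (fun s => ‖greenK k r s * (oseenG s * v s)‖ * ‖oseenG r * v r‖)
        (volume.restrict (Ioi (0:ℝ))) := (innerInt k hk v hm hv hr).norm.mul_const _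
    have hIbd : Integrable (fun s => 1 / (4 * |(k:ℝ)|) * (Dfun v s r + Dfun v r s))
        (volume.restrict (Ioi (0:ℝ))) := ((D2 v hm hv hr).add (D1 v hr)).const_mul _
    calc ‖(∫ s in Ioi (0:ℝ), greenK k r s * (oseenG s * v s)) * (oseenG r * v r)‖
        = ‖∫ s in Ioi (0:ℝ), greenK k r s * (oseenG s * v s)‖ * ‖oseenG r * v r‖ := norm_mul _ _
      _ ≤ (∫ s in Ioi (0:ℝ), ‖greenK k r s * (oseenG s * v s)‖) * ‖oseenG r * v r‖ :=
          mul_le_mul_of_nonneg_right (norm_integral_le_integral_norm _) (norm_nonneg _)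
      _ = ∫ s in Ioi (0:ℝ), ‖greenK k r s * (oseenG s * v s)‖ * ‖oseenG r * v r‖ :=
          (integral_mul_const _ _).symm
      _ ≤ ∫ s in Ioi (0:ℝ), 1 / (4 * |(k:ℝ)|) * (Dfun v s r + Dfun v r s) := by
          apply integral_mono_ae hIneg hIbd
          filter_upwards [ae_restrict_mem measurableSet_Ioi] with s hs
          rw [Real.norm_eq_abs, Real.norm_eq_abs, ← abs_mul]
          exact amgmD k hk v hr hs
      _ = 1 / (4 * |(k:ℝ)|) * (2 * oseenSigma r * v r ^ 2 + ∫ s in Ioi (0:ℝ), Dfun v s r) := by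
          rw [integral_const_mul, integral_add (D2 v hm hv hr) (D1 v hr), D1val v hr, add_comm]
  have hIflipInt : Integrable (fun r => ∫ s in Ioi (0:ℝ), Dfun v s r)
      (volume.restrict (Ioi (0:ℝ))) := (Dprodflip v hm hv).integral_prod_left
  have hΦint : Integrable (fun r =>
      1 / (4 * |(k:ℝ)|) * (2 * oseenSigma r * v r ^ 2 + ∫ s in Ioi (0:ℝ), Dfun v s r))
      (volume.restrict (Ioi (0:ℝ))) := ((sigmavsq_int v hm hv).add hIflipInt).const_mul _
  calc (∫ r in Ioi (0:ℝ),
        (∫ s in Ioi (0:ℝ), greenK k r s * (oseenG s * v s)) * (oseenG r * v r))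
      ≤ ‖∫ r in Ioi (0:ℝ),
          (∫ s in Ioi (0:ℝ), greenK k r s * (oseenG s * v s)) * (oseenG r * v r)‖ :=
        le_abs_self _
    _ ≤ ∫ r in Ioi (0:ℝ),
          ‖(∫ s in Ioi (0:ℝ), greenK k r s * (oseenG s * v s)) * (oseenG r * v r)‖ :=
        norm_integral_le_integral_norm _
    _ ≤ ∫ r in Ioi (0:ℝ),
          1 / (4 * |(k:ℝ)|) * (2 * oseenSigma r * v r ^ 2 + ∫ s in Ioi (0:ℝ), Dfun v s r) :=
        integral_mono_of_nonneg (Filter.Eventually.of_forall fun r => norm_nonneg _) hΦint hF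
    _ = 1 / (4 * |(k:ℝ)|) * ((∫ r in Ioi (0:ℝ), 2 * oseenSigma r * v r ^ 2)
          + ∫ r in Ioi (0:ℝ), (∫ s in Ioi (0:ℝ), Dfun v s r)) := by
        rw [integral_const_mul, integral_add (sigmavsq_int v hm hv) hIflipInt]
    _ = 1 / (4 * |(k:ℝ)|) * ((∫ r in Ioi (0:ℝ), 2 * oseenSigma r * v r ^ 2)
          + ∫ s in Ioi (0:ℝ), 2 * oseenSigma s * v s ^ 2) := by
        rw [Dswap v hm hv]
    _ = 1 / |(k:ℝ)| * ∫ s in Ioi (0:ℝ), oseenSigma s * v s ^ 2 := by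
        have h2 : (∫ r in Ioi (0:ℝ), 2 * oseenSigma r * v r ^ 2)
            = 2 * ∫ r in Ioi (0:ℝ), oseenSigma r * v r ^ 2 := by
          rw [← integral_const_mul]
          apply integral_congr_ae
          filter_upwards with r
          ring
        rw [h2]
        field_simp
        ring

noncomputable def phiFun (n : ℕ) (t r : ℝ) : ℝ :=
  if 0 < t ∧ t < r then t ^ (n-1) * Real.sqrt t * (Real.sqrt r / r ^ n) else 0

lemma phi_nonneg (n : ℕ) (t r : ℝ) : 0 ≤ phiFun n t r := by
  unfold phiFun
  split_ifs with h
  · have ht : 0 < t := h.1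
    have hr : 0 < r := ht.trans h.2
    positivity
  · exact le_refl 0

lemma measPhi (n : ℕ) : Measurable (fun p : ℝ × ℝ => phiFun n p.1 p.2) := by
  unfold phiFun
  apply Measurable.ite
  · exact (measurableSet_lt measurable_const measurable_fst).inter
      (measurableSet_lt measurable_fst measurable_snd)
  · exact ((measurable_fst.pow_const _).mul measurable_fst.sqrt).mul
      (measurable_snd.sqrt.div (measurable_snd.pow_const _))
  · exact measurable_const

lemma phiRep (k : ℤ) (hk : 1 ≤ |k|) {r s : ℝ} (hr : 0 < r) (hs : 0 < s) (c : ℝ) :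
    IntegrableOn (fun t => phiFun (|k|.toNat) t r * phiFun (|k|.toNat) t s * c) (Ioi 0) ∧
    ∫ t in Ioi (0:ℝ), phiFun (|k|.toNat) t r * phiFun (|k|.toNat) t s * c
      = greenK k r s * c := by
  set n := |k|.toNat with hn
  have hn1 : 1 ≤ n := one_le_toNat k hk
  set m := min r s with hm
  have hm0 : 0 < m := lt_min hr hs
  set C : ℝ := (Real.sqrt r / r ^ n) * (Real.sqrt s / s ^ n) * c with hC
  have heq : (fun t => phiFun n t r * phiFun n t s * c)
      = indicator (Ioo 0 m) (fun t => (t ^ (n-1) * Real.sqrt t) ^ 2 * C) := by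
    funext t
    simp only [phiFun, indicator, mem_Ioo, hm, lt_min_iff]
    by_cases h1 : 0 < t ∧ t < r <;> by_cases h2 : 0 < t ∧ t < s
    · rw [if_pos h1, if_pos h2, if_pos ⟨h1.1, h1.2, h2.2⟩, hC]
      ring
    · rw [if_pos h1, if_neg h2, if_neg (by tauto)]
      ring
    · rw [if_neg h1, if_pos h2, if_neg (by tauto)]
      ring
    · rw [if_neg h1, if_neg h2, if_neg (by tauto)]
      ring
  have hIoo : Ioo (0:ℝ) m ∩ Ioi 0 = Ioo 0 m := inter_eq_left.mpr (Ioo_subset_Ioi_self)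
  have hcont : IntegrableOn (fun t : ℝ => (t ^ (n-1) * Real.sqrt t) ^ 2 * C) (Ioo 0 m) := by
    apply IntegrableOn.mono_set _ Ioo_subset_Ioc_self
    exact Continuous.integrableOn_Ioc (by fun_prop)
  constructor
  · rw [heq]
    rw [IntegrableOn, integrable_indicator_iff measurableSet_Ioo,
      IntegrableOn, Measure.restrict_restrict measurableSet_Ioo, hIoo]
    exact hcont
  · rw [heq, integral_indicator measurableSet_Ioo,
      Measure.restrict_restrict measurableSet_Ioo, hIoo]
    have hpow : ∀ t ∈ Ioo (0:ℝ) m, (t ^ (n-1) * Real.sqrt t) ^ 2 * C = t ^ (2*n-1) * C := by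
      intro t ht
      rw [mul_pow, Real.sq_sqrt ht.1.le, ← pow_mul, ← pow_succ]
      congr 2
      omega
    rw [setIntegral_congr_fun measurableSet_Ioo hpow, integral_mul_const,
      ← integral_Ioc_eq_integral_Ioo, ← intervalIntegral.integral_of_le hm0.le,
      integral_pow]
    have h0 : (0:ℝ) ^ (2*n-1+1) = 0 := zero_pow (by omega)
    have hexp : (2*n-1+1 : ℕ) = 2*n := by omega
    have hcast : ((2*n-1 : ℕ) : ℝ) + 1 = 2 * n := by
      have h' : ((2*n-1 : ℕ) + 1 : ℕ) = 2*n := by omega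
      exact_mod_cast congrArg (Nat.cast : ℕ → ℝ) h'
    rw [h0, hexp, hcast, sub_zero]
    -- now algebra
    unfold greenK
    rw [← hn, min_div_eq hr hs, ← hm, div_pow, ← pow_mul, Real.sqrt_mul hr.le, hC, abs_cast_eq k, ← hn]
    have hrn : (r:ℝ) ^ n ≠ 0 := by positivity
    have hsn : (s:ℝ) ^ n ≠ 0 := by positivity
    have hnR : ((n:ℝ)) ≠ 0 := Nat.cast_ne_zero.mpr (by omega)
    have hmul : (r * s) ^ n = r ^ n * s ^ n := mul_pow r s n
    rw [hmul]
    field_simp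

lemma lower (k : ℤ) (hk : 1 ≤ |k|) (v : ℝ → ℝ) (hm : Measurable v)
    (hv : MemLp v 2 (volume.restrict (Ioi (0:ℝ)))) :
    0 ≤ ∫ r in Ioi (0:ℝ),
        (∫ s in Ioi (0:ℝ), greenK k r s * (oseenG s * v s)) * (oseenG r * v r) := by
  have hP : Integrable (fun z : ℝ × ℝ =>
      greenK k z.1 z.2 * (oseenG z.2 * v z.2) * (oseenG z.1 * v z.1))
      ((volume.restrict (Ioi (0:ℝ))).prod (volume.restrict (Ioi (0:ℝ)))) := Pprod k hk v hm hv
  have h1 : (∫ r in Ioi (0:ℝ),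
        (∫ s in Ioi (0:ℝ), greenK k r s * (oseenG s * v s)) * (oseenG r * v r))
      = ∫ z, greenK k z.1 z.2 * (oseenG z.2 * v z.2) * (oseenG z.1 * v z.1)
          ∂((volume.restrict (Ioi (0:ℝ))).prod (volume.restrict (Ioi (0:ℝ)))) := by
    rw [integral_prod _ hP]
    apply integral_congr_ae
    filter_upwards with r
    rw [← integral_mul_const]
  have h2 : (∫ z, greenK k z.1 z.2 * (oseenG z.2 * v z.2) * (oseenG z.1 * v z.1)
        ∂((volume.restrict (Ioi (0:ℝ))).prod (volume.restrict (Ioi (0:ℝ)))))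
      = ∫ z, (∫ t in Ioi (0:ℝ), (phiFun (|k|.toNat) t z.1 * (oseenG z.1 * v z.1))
            * (phiFun (|k|.toNat) t z.2 * (oseenG z.2 * v z.2)))
          ∂((volume.restrict (Ioi (0:ℝ))).prod (volume.restrict (Ioi (0:ℝ)))) := by
    apply integral_congr_ae
    filter_upwards [ae_prod_mem] with z hz
    have h := (phiRep k hk hz.1 hz.2 ((oseenG z.2 * v z.2) * (oseenG z.1 * v z.1))).2
    rw [mul_assoc, ← h]
    apply integral_congr_ae
    filter_upwards with t
    ring
  have hQint : Integrable (Function.uncurry (fun (z : ℝ × ℝ) (t : ℝ) =>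
      (phiFun (|k|.toNat) t z.1 * (oseenG z.1 * v z.1))
        * (phiFun (|k|.toNat) t z.2 * (oseenG z.2 * v z.2))))
      (((volume.restrict (Ioi (0:ℝ))).prod (volume.restrict (Ioi (0:ℝ)))).prod
        (volume.restrict (Ioi (0:ℝ)))) := by
    have hQmeas : Measurable (Function.uncurry (fun (z : ℝ × ℝ) (t : ℝ) =>
        (phiFun (|k|.toNat) t z.1 * (oseenG z.1 * v z.1))
          * (phiFun (|k|.toNat) t z.2 * (oseenG z.2 * v z.2)))) := by
      have hφ1 : Measurable (fun q : (ℝ × ℝ) × ℝ => phiFun (|k|.toNat) q.2 q.1.1) :=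
        (measPhi _).comp (measurable_snd.prodMk (measurable_fst.comp measurable_fst))
      have hφ2 : Measurable (fun q : (ℝ × ℝ) × ℝ => phiFun (|k|.toNat) q.2 q.1.2) :=
        (measPhi _).comp (measurable_snd.prodMk (measurable_snd.comp measurable_fst))
      exact (hφ1.mul ((measG.comp (measurable_fst.comp measurable_fst)).mul
          (hm.comp (measurable_fst.comp measurable_fst)))).mul
        (hφ2.mul ((measG.comp (measurable_snd.comp measurable_fst)).mul
          (hm.comp (measurable_snd.comp measurable_fst))))
    rw [integrable_prod_iff hQmeas.aestronglyMeasurable]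
    constructor
    · filter_upwards [ae_prod_mem] with z hz
      have h := (phiRep k hk hz.1 hz.2 ((oseenG z.2 * v z.2) * (oseenG z.1 * v z.1))).1
      apply Integrable.congr h
      filter_upwards with t
      simp only [Function.uncurry_apply_pair]
      ring
    · apply Integrable.congr hP.abs
      filter_upwards [ae_prod_mem] with z hz
      have h := (phiRep k hk hz.1 hz.2
        (|oseenG z.2 * v z.2| * |oseenG z.1 * v z.1|)).2
      calc |greenK k z.1 z.2 * (oseenG z.2 * v z.2) * (oseenG z.1 * v z.1)|
          = greenK k z.1 z.2 * (|oseenG z.2 * v z.2| * |oseenG z.1 * v z.1|) := by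
            rw [abs_mul, abs_mul, abs_of_nonneg (greenK_nonneg k hz.1 hz.2), mul_assoc]
        _ = ∫ t in Ioi (0:ℝ), phiFun (|k|.toNat) t z.1 * phiFun (|k|.toNat) t z.2
              * (|oseenG z.2 * v z.2| * |oseenG z.1 * v z.1|) := h.symm
        _ = ∫ t in Ioi (0:ℝ), ‖(phiFun (|k|.toNat) t z.1 * (oseenG z.1 * v z.1))
              * (phiFun (|k|.toNat) t z.2 * (oseenG z.2 * v z.2))‖ := by
            apply integral_congr_ae
            filter_upwards with t
            simp only [Real.norm_eq_abs, abs_mul,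
              abs_of_nonneg (phi_nonneg (|k|.toNat) t z.1),
              abs_of_nonneg (phi_nonneg (|k|.toNat) t z.2)]
            ring
  have h3 : (∫ z, (∫ t in Ioi (0:ℝ), (phiFun (|k|.toNat) t z.1 * (oseenG z.1 * v z.1))
          * (phiFun (|k|.toNat) t z.2 * (oseenG z.2 * v z.2)))
        ∂((volume.restrict (Ioi (0:ℝ))).prod (volume.restrict (Ioi (0:ℝ)))))
      = ∫ t in Ioi (0:ℝ),
          ∫ z, ((phiFun (|k|.toNat) t z.1 * (oseenG z.1 * v z.1))
              * (phiFun (|k|.toNat) t z.2 * (oseenG z.2 * v z.2)))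
            ∂((volume.restrict (Ioi (0:ℝ))).prod (volume.restrict (Ioi (0:ℝ)))) :=
    integral_integral_swap hQint
  rw [h1, h2, h3]
  apply integral_nonneg
  intro t
  have hpm : (∫ z, ((phiFun (|k|.toNat) t z.1 * (oseenG z.1 * v z.1))
          * (phiFun (|k|.toNat) t z.2 * (oseenG z.2 * v z.2)))
        ∂((volume.restrict (Ioi (0:ℝ))).prod (volume.restrict (Ioi (0:ℝ)))))
      = (∫ r in Ioi (0:ℝ), phiFun (|k|.toNat) t r * (oseenG r * v r))
        * ∫ s in Ioi (0:ℝ), phiFun (|k|.toNat) t s * (oseenG s * v s) :=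
    integral_prod_mul (f := fun r => phiFun (|k|.toNat) t r * (oseenG r * v r))
      (g := fun s => phiFun (|k|.toNat) t s * (oseenG s * v s))
  simp only
  rw [hpm]
  exact mul_self_nonneg _

theorem stmt_15 (k : ℤ) (hk : 1 ≤ |k|) (w : ℝ → ℝ)
    (hw : MemLp w 2 (volume.restrict (Ioi (0 : ℝ)))) :
    0 ≤ (∫ r in Ioi (0 : ℝ),
          oseenG r * (∫ s in Ioi (0 : ℝ), greenK k r s * (oseenG s * w s)) * w r) ∧
      (∫ r in Ioi (0 : ℝ),
          oseenG r * (∫ s in Ioi (0 : ℝ), greenK k r s * (oseenG s * w s)) * w r) ≤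
        1 / |(k : ℝ)| * ∫ s in Ioi (0 : ℝ), oseenSigma s * (w s) ^ 2 := by
  set v : ℝ → ℝ := hw.1.mk w with hv_def
  have hvm : Measurable v := hw.1.stronglyMeasurable_mk.measurable
  have hae : w =ᵐ[volume.restrict (Ioi (0:ℝ))] v := hw.1.ae_eq_mk
  have hv : MemLp v 2 (volume.restrict (Ioi (0:ℝ))) := hw.ae_eq hae
  have E1 : ∀ r : ℝ, (∫ s in Ioi (0:ℝ), greenK k r s * (oseenG s * w s))
      = ∫ s in Ioi (0:ℝ), greenK k r s * (oseenG s * v s) := by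
    intro r
    apply integral_congr_ae
    filter_upwards [hae] with s hsw
    rw [hsw]
  have E2 : (∫ r in Ioi (0:ℝ),
        oseenG r * (∫ s in Ioi (0:ℝ), greenK k r s * (oseenG s * w s)) * w r)
      = ∫ r in Ioi (0:ℝ),
          (∫ s in Ioi (0:ℝ), greenK k r s * (oseenG s * v s)) * (oseenG r * v r) := by
    apply integral_congr_ae
    filter_upwards [hae] with r hr
    rw [E1 r, hr]
    ring
  have E3 : (∫ s in Ioi (0:ℝ), oseenSigma s * (w s) ^ 2)
      = ∫ s in Ioi (0:ℝ), oseenSigma s * v s ^ 2 := by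
    apply integral_congr_ae
    filter_upwards [hae] with s hsw
    rw [hsw]
  constructor
  · rw [E2]
    exact lower k hk v hvm hv
  · rw [E2, E3]
    exact upper k hk v hvm hv
end

section
/- Let ν ∈ (0,1), r₁ > 0 with σ(r₁) = ν where σ(r) = 4(1-e^{-r²/4})/r², and suppose r₁ ≤ 1 and 1 ≤ β ≤ r₁^{-4}. Then there are constants c₁, c₂ > 0 (independent of r₁, β) such that for all r > 0: c₁/r² + c₂β(ν - σ(r)) ≥ β^{1/2}. -/
open Real

lemma expA {x : ℝ} (hx : 0 ≤ x) : Real.exp (-x) ≤ 1 - x + x ^ 2 / 2 := by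
  have hq := Real.quadratic_le_exp_of_nonneg hx
  have hp : (0:ℝ) < 1 + x + x ^ 2 / 2 := by positivity
  have h1 : Real.exp (-x) ≤ (1 + x + x ^ 2 / 2)⁻¹ := by
    rw [Real.exp_neg]
    exact inv_anti₀ hp hq
  have h2 : (1 + x + x ^ 2 / 2)⁻¹ ≤ 1 - x + x ^ 2 / 2 := by
    rw [inv_le_iff_one_le_mul₀ hp]
    nlinarith [sq_nonneg x]
  linarith

lemma expB {x : ℝ} (hx : 0 ≤ x) (hx2 : x ≤ 2) : 1 - x + x ^ 2 / 6 ≤ Real.exp (-x) := by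
  have h3 : (0:ℝ) ≤ 1 - x / 3 := by linarith
  have he : 1 - x / 3 ≤ Real.exp (-(x / 3)) := by
    linarith [Real.add_one_le_exp (-(x / 3))]
  have hc : (1 - x / 3) ^ 3 ≤ Real.exp (-(x / 3)) ^ 3 := pow_le_pow_left₀ h3 he 3
  have hexp3 : Real.exp (-(x / 3)) ^ 3 = Real.exp (-x) := by
    rw [← Real.exp_nat_mul]
    norm_num
    ring
  rw [hexp3] at hc
  nlinarith [sq_nonneg x, hc]

lemma sigma_ge {r : ℝ} (hr : 0 < r) : 1 - r ^ 2 / 8 ≤ oseenSigma r := by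
  have hx : (0:ℝ) ≤ r ^ 2 / 4 := by positivity
  have h := expA hx
  have hr2 : (0:ℝ) < r ^ 2 := by positivity
  unfold oseenSigma
  rw [le_div_iff₀ hr2]
  have : -(r ^ 2 / 4) = -r ^ 2 / 4 := by ring
  rw [this] at h
  nlinarith [h]

lemma sigma_le_small {r : ℝ} (hr : 0 < r) (h8 : r ^ 2 ≤ 8) :
    oseenSigma r ≤ 1 - r ^ 2 / 24 := by
  have hx : (0:ℝ) ≤ r ^ 2 / 4 := by positivity
  have hx2 : r ^ 2 / 4 ≤ 2 := by linarith
  have h := expB hx hx2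
  have hr2 : (0:ℝ) < r ^ 2 := by positivity
  unfold oseenSigma
  rw [div_le_iff₀ hr2]
  have : -(r ^ 2 / 4) = -r ^ 2 / 4 := by ring
  rw [this] at h
  nlinarith [h]

lemma sigma_le_large {r : ℝ} (hr : 0 < r) (h8 : 8 ≤ r ^ 2) :
    oseenSigma r ≤ 1 / 2 := by
  have hr2 : (0:ℝ) < r ^ 2 := by positivity
  have he : 0 < Real.exp (-r ^ 2 / 4) := Real.exp_pos _
  unfold oseenSigma
  rw [div_le_iff₀ hr2]
  nlinarith

theorem stmt_19 :
    ∃ c₁ c₂ : ℝ, 0 < c₁ ∧ 0 < c₂ ∧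
      ∀ r₁ β : ℝ, 0 < r₁ → r₁ ≤ 1 → 1 ≤ β → β ≤ r₁⁻¹ ^ 4 →
        0 < oseenSigma r₁ → oseenSigma r₁ < 1 →
        ∀ r : ℝ, 0 < r →
          c₁ / r ^ 2 + c₂ * β * (oseenSigma r₁ - oseenSigma r) ≥ Real.sqrt β := by
  refine ⟨4, 4, by norm_num, by norm_num, ?_⟩
  intro r₁ β hr₁ hr₁1 hβ1 hβ2 _ _ r hr
  set s := Real.sqrt β with hs
  have hβ0 : (0:ℝ) < β := by linarith
  have hs1 : 1 ≤ s := by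
    rw [hs, show (1:ℝ) = Real.sqrt 1 by simp]
    exact Real.sqrt_le_sqrt hβ1
  have hss : s * s = β := Real.mul_self_sqrt hβ0.le
  have hrs : r₁ ^ 2 * s ≤ 1 := by
    have h4 : r₁ ^ 4 * β ≤ 1 := by
      have : β ≤ (r₁ ^ 4)⁻¹ := by rw [← inv_pow]; exact hβ2
      have hp : (0:ℝ) < r₁ ^ 4 := by positivity
      calc r₁ ^ 4 * β ≤ r₁ ^ 4 * (r₁ ^ 4)⁻¹ := by
            exact mul_le_mul_of_nonneg_left this hp.le
        _ = 1 := mul_inv_cancel₀ hp.ne'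
    have hsq : (r₁ ^ 2 * s) ^ 2 ≤ 1 ^ 2 := by
      have : (r₁ ^ 2 * s) ^ 2 = r₁ ^ 4 * β := by
        rw [mul_pow, ← hss]; ring
      rw [this]; simpa using h4
    have hnn : 0 ≤ r₁ ^ 2 * s := by positivity
    nlinarith
  have hσ1 : 1 - r₁ ^ 2 / 8 ≤ oseenSigma r₁ := sigma_ge hr₁
  have hr2 : (0:ℝ) < r ^ 2 := by positivity
  have hs0 : (0:ℝ) < s := by linarith
  rcases le_or_gt (r ^ 2) 8 with h8 | h8
  · have hσr : oseenSigma r ≤ 1 - r ^ 2 / 24 := sigma_le_small hr h8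
    have key : 4 / r ^ 2 + s * s * r ^ 2 / 6 ≥ 3 / 2 * s := by
      rw [ge_iff_le, ← sub_nonneg]
      have h := sq_nonneg (s * r ^ 2 - 9 / 2)
      have heq : 4 / r ^ 2 + s * s * r ^ 2 / 6 - 3 / 2 * s =
          (4 + s * s * r ^ 4 / 6 - 3 / 2 * s * r ^ 2) / r ^ 2 := by
        field_simp
      rw [heq]
      apply div_nonneg _ hr2.le
      nlinarith
    have hterm : 4 * β * (oseenSigma r₁ - oseenSigma r) ≥
        s * s * r ^ 2 / 6 - s / 2 := by
      have hd : oseenSigma r₁ - oseenSigma r ≥ r ^ 2 / 24 - r₁ ^ 2 / 8 := by linarith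
      have : 4 * β * (r ^ 2 / 24 - r₁ ^ 2 / 8) ≤ 4 * β * (oseenSigma r₁ - oseenSigma r) :=
        mul_le_mul_of_nonneg_left hd (by positivity)
      have hβs : β * r₁ ^ 2 ≤ s := by
        calc β * r₁ ^ 2 = s * (r₁ ^ 2 * s) := by rw [← hss]; ring
          _ ≤ s * 1 := mul_le_mul_of_nonneg_left hrs hs0.le
          _ = s := mul_one s
      nlinarith [this]
    linarith
  · have hσr : oseenSigma r ≤ 1 / 2 := sigma_le_large hr h8.le
    have hd : oseenSigma r₁ - oseenSigma r ≥ 1 / 2 - r₁ ^ 2 / 8 := by linarith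
    have h1 : 4 * β * (1 / 2 - r₁ ^ 2 / 8) ≤ 4 * β * (oseenSigma r₁ - oseenSigma r) :=
      mul_le_mul_of_nonneg_left hd (by positivity)
    have hβs : β * r₁ ^ 2 ≤ s := by
      calc β * r₁ ^ 2 = s * (r₁ ^ 2 * s) := by rw [← hss]; ring
        _ ≤ s * 1 := mul_le_mul_of_nonneg_left hrs hs0.le
        _ = s := mul_one s
    have hpos : 0 < 4 / r ^ 2 := by positivity
    nlinarith [hss, hs1]
end
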